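/- Let B/A be a G-Galois extension of commutative rings for a finite group G, and let q: G → Q be a surjective group homomorphism with kernel K. Then the ring (∏_{Q} B)^G, where G acts on the product ∏_{a ∈ Q} B by g·(l_a)_a = (g·l_{q(g)⁻¹a})_a, is isomorphic as a ring to the fixed subring B^K, via the map B^K → ∏_Q B sending l to (g·l)_{q(g) ∈ Q}. -/

import Mathlib

open scoped Pointwise

variable {G Q B : Type*}

/-- The fixed subring of `∏_Q B` under the twisted `G`-action
`g·(l_a)_a = (g·l_{q(g)⁻¹a})_a`. -/
def twistedFixedSubring [Group G] [Group Q] [CommRing B] [MulSemiringAction G B]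
    (q : G →* Q) : Subring (Q → B) where
  carrier := {l | ∀ (g : G) (a : Q), g • l ((q g)⁻¹ * a) = l a}
  mul_mem' := by
    intro l m hl hm g a
    simp only [Pi.mul_apply, smul_mul']
    rw [hl g a, hm g a]
  one_mem' := by intro g a; simp
  add_mem' := by
    intro l m hl hm g a
    simp only [Pi.add_apply, smul_add]
    rw [hl g a, hm g a]
  zero_mem' := by intro g a; simp
  neg_mem' := by
    intro l hl g a
    simp only [Pi.neg_apply, smul_neg]
    rw [hl g a]

/-- The fixed subring `B^K` for `K = ker q`. -/
def kerFixedSubring [Group G] [Group Q] [CommRing B] [MulSemiringAction G B]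
    (q : G →* Q) : Subring B where
  carrier := {b | ∀ g ∈ q.ker, g • b = b}
  mul_mem' := by intro b c hb hc g hg; rw [smul_mul', hb g hg, hc g hg]
  one_mem' := by intro g hg; simp
  add_mem' := by intro b c hb hc g hg; rw [smul_add, hb g hg, hc g hg]
  zero_mem' := by intro g hg; simp
  neg_mem' := by intro b hb g hg; rw [smul_neg, hb g hg]

/-!
A `G`-invariant family `(l_a)_{a ∈ Q}` is determined by its component `l_1`, which is fixed by
`K = ker q`, through `l_{q g} = g • l_1`. Conversely, for `l ∈ B^K` the element `g • l` depends
only on `q g`, so choosing any set-theoretic section `s` of `q` gives the invariant family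
`(s a • l)_a`, whose `q g`-component is `g • l` whatever `s` is.
-/

section

variable [Group G] [Group Q] [CommRing B] [MulSemiringAction G B] {q : G →* Q}

theorem kerFixedSubring.smul_eq_of_map_eq {l : B} (hl : l ∈ kerFixedSubring q) {g g' : G}
    (h : q g = q g') : g • l = g' • l := by
  have hker : g'⁻¹ * g ∈ q.ker := by simp [MonoidHom.mem_ker, h]
  calc g • l = g' • (g'⁻¹ * g) • l := by rw [smul_smul, mul_inv_cancel_left]
    _ = g' • l := by rw [hl _ hker]

theorem twistedFixedSubring.apply_map_eq_smul_apply_one {l : Q → B}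
    (hl : l ∈ twistedFixedSubring q) (g : G) : l (q g) = g • l 1 := by
  simpa using (hl g (q g)).symm

theorem twistedFixedSubring.apply_one_mem_kerFixedSubring {l : Q → B}
    (hl : l ∈ twistedFixedSubring q) : l 1 ∈ kerFixedSubring q := by
  intro g hg
  rw [← twistedFixedSubring.apply_map_eq_smul_apply_one hl, MonoidHom.mem_ker.mp hg]

variable {s : Q → G}

theorem kerFixedSubring.smul_section_mem_twistedFixedSubring (hs : Function.RightInverse s q)
    {l : B} (hl : l ∈ kerFixedSubring q) : (fun a => s a • l) ∈ twistedFixedSubring q := by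
  intro g a
  rw [smul_smul]
  exact kerFixedSubring.smul_eq_of_map_eq hl (by rw [map_mul, hs, hs, mul_inv_cancel_left])

def twistedFixedEquiv (hs : Function.RightInverse s q) :
    kerFixedSubring (B := B) q ≃+* twistedFixedSubring (B := B) q where
  toFun l := ⟨fun a => s a • l.1, kerFixedSubring.smul_section_mem_twistedFixedSubring hs l.2⟩
  invFun m := ⟨m.1 1, twistedFixedSubring.apply_one_mem_kerFixedSubring m.2⟩
  left_inv l := Subtype.ext <| by
    simpa using kerFixedSubring.smul_eq_of_map_eq l.2 (g := s 1) (g' := 1) (by rw [hs, map_one])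
  right_inv m := Subtype.ext <| funext fun a => by
    simpa [hs a] using (twistedFixedSubring.apply_map_eq_smul_apply_one m.2 (s a)).symm
  map_mul' l l' := Subtype.ext <| funext fun a => smul_mul' (s a) l.1 l'.1
  map_add' l l' := Subtype.ext <| funext fun a => smul_add (s a) l.1 l'.1

theorem twistedFixedEquiv_apply_map (hs : Function.RightInverse s q)
    (l : kerFixedSubring q) (g : G) : (twistedFixedEquiv hs l).1 (q g) = g • (l : B) :=
  kerFixedSubring.smul_eq_of_map_eq l.2 (hs (q g))

end

theorem pushforward_torsor_fixed_ring_general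
    [Group G] [Group Q] [CommRing B] [MulSemiringAction G B]
    (q : G →* Q) (hq : Function.Surjective q) :
    ∃ e : kerFixedSubring q ≃+* twistedFixedSubring q,
      ∀ (l : kerFixedSubring q) (g : G),
        ((e l).1 (q g) : B) = g • (l.1 : B) := by
  obtain ⟨s, hs⟩ := hq.hasRightInverse
  exact ⟨twistedFixedEquiv hs, twistedFixedEquiv_apply_map hs⟩

/-- for a `G`-Galois extension `B/A` of commutative rings (`B^G = A`)
and a surjective homomorphism `q : G → Q` with kernel `K`, the ring `(∏_Q B)^G`
(with the twisted action) is isomorphic to `B^K`, via `l ↦ (g·l)_{q(g)}`. -/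
theorem pushforward_torsor_fixed_ring
    [Group G] [Finite G] [Group Q] [CommRing B] [MulSemiringAction G B]
    (A : Type*) [CommRing A] [Algebra A B]
    (hGalois : ∀ b : B, (∀ g : G, g • b = b) ↔ b ∈ (algebraMap A B).range)
    (q : G →* Q) (hq : Function.Surjective q) :
    ∃ e : kerFixedSubring q ≃+* twistedFixedSubring q,
      ∀ (l : kerFixedSubring q) (g : G),
        ((e l).1 (q g) : B) = g • (l.1 : B) :=
  pushforward_torsor_fixed_ring_general q hq
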